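/- Let X, Y be coinfinite primitive recursive sets with R_X ≤_pr R_Y. Then (X,Y) satisfies the ♦-property if and only if there exists a primitive recursive function r such that p_{\bar X}(n) ≤ r(p_{\bar Y}(n+1)) for infinitely many n, where p_{\bar U} is the increasing enumeration of the complement of U. -/

import Mathlib

/-!
Everything is read off the counting functions `zc`. A reduction `f` of `R_A` to `R_B` is injective
on every set meeting `A` at most once and sends at most one point of `Aᶜ` into `B`, so
`zc A t ≤ zc B (∑_{k ≤ t + 1} f k)`. Applied to reductions `R_X' → R_X` and `R_Y → R_Y'` at a point
where `zc X'` and `zc Y'` meet, this bounds `p_X̄(n)` by a primitive recursive function of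
`p_Ȳ(n + 1)`.

Conversely, the set `stretch A v` whose complement is `v '' Aᶜ` is pr-bireducible with `A` for
every strictly increasing primitive recursive `v`. Stretch `Y` by a `u` with `u y + r y' < u y'`
for `y < y'`, and `X` by `x ↦ u (catchUp X Y x) + x + 1`, where `catchUp X Y x` is the first point
at which the complement count of `Y` reaches that of `X` at `x`. Whenever
`p_X̄(n) ≤ r (p_Ȳ(n + 1))`, both stretched sets then have exactly `n + 1` complement points below
`u (p_Ȳ(n + 1))`.
-/

/-- The equivalence relation `R_X`: `x R_X y` iff both in `X` or `x = y`. -/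
def REq (X : Set ℕ) (x y : ℕ) : Prop := (x ∈ X ∧ y ∈ X) ∨ x = y

/-- Primitive recursive reducibility between binary relations on ℕ. -/
def PrRed (R S : ℕ → ℕ → Prop) : Prop :=
  ∃ f : ℕ → ℕ, Primrec f ∧ ∀ x y, R x y ↔ S (f x) (f y)

/-- pr-bireducibility. -/
def PrEquiv (R S : ℕ → ℕ → Prop) : Prop := PrRed R S ∧ PrRed S R

/-- `X` is a primitive recursive set. -/
def PRSet (X : Set ℕ) : Prop :=
  ∃ f : ℕ → Bool, Primrec f ∧ ∀ n, n ∈ X ↔ f n = true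

/-- `#(0^X)[s]`: the number of elements of the complement of `X` that are `≤ s`. -/
noncomputable def zc (X : Set ℕ) (s : ℕ) : ℕ := {k | k ≤ s ∧ k ∉ X}.ncard

/-- The ♦-property for a pair of sets. -/
def DiamondProp (X Y : Set ℕ) : Prop :=
  ∃ X' Y' : Set ℕ, PRSet X' ∧ PRSet Y' ∧
    PrEquiv (REq X') (REq X) ∧ PrEquiv (REq Y') (REq Y) ∧
    ∀ s, ∃ t, s ≤ t ∧ zc X' t = zc Y' t

/-- The increasing enumeration of the complement of `U`. -/
noncomputable def penum (U : Set ℕ) (n : ℕ) : ℕ := Nat.nth (fun k => k ∉ U) n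

open Finset

section Count

variable {U : Set ℕ}

open Classical in
lemma zc_eq_count (U : Set ℕ) (s : ℕ) : zc U s = Nat.count (· ∉ U) (s + 1) := by
  rw [zc, Nat.count_eq_card_filter_range, ← Set.ncard_coe_finset]
  congr 1
  ext k
  simp

lemma zc_mono (U : Set ℕ) : Monotone (zc U) := fun a b hab => by
  classical
  simp only [zc_eq_count]
  exact Nat.count_monotone _ (by omega)

lemma zc_le_ncard_compl (hUc : Uᶜ.Finite) (s : ℕ) : zc U s ≤ Uᶜ.ncard :=
  Set.ncard_le_ncard (fun _ hk => hk.2) hUc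

lemma zc_penum (hUc : Uᶜ.Infinite) (n : ℕ) : zc U (penum U n) = n + 1 := by
  classical
  rw [zc_eq_count, Nat.count_succ, penum, Nat.count_nth_of_infinite hUc,
    if_pos (Nat.nth_mem_of_infinite hUc n)]

lemma penum_le_iff (hUc : Uᶜ.Infinite) {n t : ℕ} : penum U n ≤ t ↔ n < zc U t := by
  classical
  rw [zc_eq_count, penum, Nat.lt_nth_iff_count_lt hUc, Nat.lt_succ_iff]

lemma penum_strictMono (hUc : Uᶜ.Infinite) : StrictMono (penum U) :=
  Nat.nth_strictMono hUc

lemma penum_succ_le_of_lt {x n : ℕ} (hx : x ∉ U) (h : penum U n < x) :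
    penum U (n + 1) ≤ x :=
  not_lt.1 fun h' => (Nat.le_nth_of_lt_nth_succ h' hx).not_gt h

end Count

def partialSum (g : ℕ → ℕ) (n : ℕ) : ℕ := ∑ k ∈ range (n + 1), g k

section PartialSum

variable {g : ℕ → ℕ}

lemma le_partialSum {k n : ℕ} (h : k ≤ n) : g k ≤ partialSum g n :=
  single_le_sum (fun _ _ => Nat.zero_le _) (mem_range.2 (Nat.lt_succ_of_le h))

lemma partialSum_mono (g : ℕ → ℕ) : Monotone (partialSum g) := fun _ _ h =>
  sum_le_sum_of_subset (range_subset_range.2 (Nat.succ_le_succ h))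

lemma partialSum_add_le {y y' : ℕ} (h : y < y') : partialSum g y + g y' ≤ partialSum g y' := by
  rw [partialSum, partialSum, sum_range_succ _ y']
  exact Nat.add_le_add_right (sum_le_sum_of_subset (range_subset_range.2 h)) _

lemma primrec_partialSum (hg : Primrec g) : Primrec (partialSum g) := by
  refine (Primrec.nat_rec₁ (g 0) (Primrec.nat_add.comp₂ Primrec₂.right
    (hg.comp (Primrec.succ.comp Primrec.fst)).to₂)).of_eq fun n => ?_
  induction n with
  | zero => simp [partialSum]
  | succ n ih => rw [partialSum, sum_range_succ, ← partialSum, ← ih]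

end PartialSum

section Reduction

variable {A B : Set ℕ} {f : ℕ → ℕ} (hf : ∀ x y, REq A x y ↔ REq B (f x) (f y))
include hf

/-- No two distinct points of `D` are `R_A`-equivalent, so `f` is injective on `D` and sends at
most one point of `D` into `B`. -/
lemma card_le_zc_add_one_of_reduction {D : Finset ℕ} {M : ℕ}
    (hD : ∀ x ∈ D, ∀ y ∈ D, REq A x y → x = y) (hM : ∀ k ∈ D, f k ≤ M) :
    #D ≤ zc B M + 1 := by
  classical
  have hB : #{k ∈ D | f k ∈ B} ≤ 1 := card_le_one.2 fun x hx y hy =>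
    hD x (mem_filter.1 hx).1 y (mem_filter.1 hy).1
      ((hf x y).2 (Or.inl ⟨(mem_filter.1 hx).2, (mem_filter.1 hy).2⟩))
  have hBc : #{k ∈ D | f k ∉ B} ≤ zc B M := by
    rw [zc_eq_count, Nat.count_eq_card_filter_range]
    refine card_le_card_of_injOn f (fun k hk => ?_) fun x hx y hy hxy => ?_
    · simp only [coe_filter, Set.mem_ofPred_eq, mem_range] at hk ⊢
      exact ⟨Nat.lt_succ_of_le (hM k hk.1), hk.2⟩
    · simp only [coe_filter, Set.mem_ofPred_eq] at hx hy
      exact hD x hx.1 y hy.1 ((hf x y).2 (Or.inr hxy))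
  rw [← card_filter_add_card_filter_not (fun k => f k ∈ B)]
  omega

lemma zc_le_zc_of_reduction {t M : ℕ} (hM : ∀ k ≤ t + 1, f k ≤ M) : zc A t ≤ zc B M := by
  classical
  -- the point `t + 1` makes up for the one point of `Aᶜ` that may be sent into `B`
  set D := insert (t + 1) {k ∈ range (t + 1) | k ∉ A}
  have hcard : #D = zc A t + 1 := by
    rw [card_insert_of_notMem (by simp), zc_eq_count, Nat.count_eq_card_filter_range]
  have hD : ∀ x ∈ D, ∀ y ∈ D, REq A x y → x = y := by
    intro x hx y hy hxy
    simp only [D, mem_insert, mem_filter, mem_range] at hx hy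
    rcases hxy with ⟨hxA, hyA⟩ | rfl
    · rcases hx with rfl | ⟨_, hx⟩ <;> rcases hy with rfl | ⟨_, hy⟩ <;> tauto
    · rfl
  have := card_le_zc_add_one_of_reduction hf hD fun k hk => hM k (by
    simp only [D, mem_insert, mem_filter, mem_range] at hk; omega)
  omega

lemma zc_le_zc_partialSum (t : ℕ) : zc A t ≤ zc B (partialSum f (t + 1)) :=
  zc_le_zc_of_reduction hf fun _ hk => le_partialSum hk

lemma infinite_compl_of_reduction (hAc : Aᶜ.Infinite) : Bᶜ.Infinite := fun hBc => by
  have h := zc_le_zc_partialSum hf (penum A Bᶜ.ncard)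
  rw [zc_penum hAc] at h
  have := zc_le_ncard_compl hBc (partialSum f (penum A Bᶜ.ncard + 1))
  omega

lemma penum_le_partialSum (hAc : Aᶜ.Infinite) (hBc : Bᶜ.Infinite) (k : ℕ) :
    penum B k ≤ partialSum f (penum A k + 1) := by
  rw [penum_le_iff hBc, Nat.lt_iff_add_one_le, ← zc_penum hAc k]
  exact zc_le_zc_partialSum hf _

end Reduction

section Primrec

variable {U : Set ℕ}

lemma prSet_iff_primrecPred : PRSet U ↔ PrimrecPred (· ∈ U) := by
  classical
  constructor
  · rintro ⟨χ, hχ, hU⟩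
    exact Primrec.primrecPred (hχ.of_eq fun n => by simp [hU])
  · intro hU
    exact ⟨fun n => decide (n ∈ U), hU.decide, fun n => by simp⟩

lemma primrec_zc (hU : PrimrecPred (· ∈ U)) : Primrec (zc U) := by
  classical
  refine (Primrec.list_length.comp ((Primrec.listFilter hU.not).comp
    (Primrec.list_range.comp Primrec.succ))).of_eq fun s => ?_
  rw [zc_eq_count, Nat.count, List.countP_eq_length_filter]

end Primrec

lemma REq_iff_REq_of {A B : Set ℕ} {f : ℕ → ℕ} (hconst : ∀ x ∈ A, ∀ y ∈ A, f x = f y)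
    (hcompl : ∀ x ∉ A, f x ∉ B) (hinj : ∀ x ∉ A, ∀ y, f x = f y → x = y) (x y : ℕ) :
    REq A x y ↔ REq B (f x) (f y) := by
  constructor
  · rintro (⟨hx, hy⟩ | rfl)
    · exact Or.inr (hconst x hx y hy)
    · exact Or.inr rfl
  · rintro (⟨hx, hy⟩ | hxy)
    · exact Or.inl ⟨not_not.1 fun h => hcompl x h hx, not_not.1 fun h => hcompl y h hy⟩
    · by_cases hxA : x ∈ A
      · by_cases hyA : y ∈ A
        · exact Or.inl ⟨hxA, hyA⟩
        · exact Or.inr (hinj y hyA x hxy.symm).symm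
      · exact Or.inr (hinj x hxA y hxy)

def stretch (A : Set ℕ) (v : ℕ → ℕ) : Set ℕ := (v '' Aᶜ)ᶜ

section Stretch

variable {A : Set ℕ} {v : ℕ → ℕ}

lemma notMem_stretch_iff {t : ℕ} : t ∉ stretch A v ↔ ∃ x ∉ A, v x = t := by
  simp [stretch]

lemma zc_stretch (hAc : Aᶜ.Infinite) (hv : StrictMono v) {n t : ℕ}
    (hlo : v (penum A n) ≤ t) (hhi : t < v (penum A (n + 1))) :
    zc (stretch A v) t = n + 1 := by
  have hset : {k | k ≤ t ∧ k ∉ stretch A v} = v '' {x | x ≤ penum A n ∧ x ∉ A} := by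
    ext k
    simp only [Set.mem_ofPred_eq, notMem_stretch_iff, Set.mem_image]
    constructor
    · rintro ⟨hk, x, hx, rfl⟩
      refine ⟨x, ⟨not_lt.1 fun h => ?_, hx⟩, rfl⟩
      exact (hhi.trans_le (hv.monotone (penum_succ_le_of_lt hx h))).not_ge hk
    · rintro ⟨x, ⟨hxn, hx⟩, rfl⟩
      exact ⟨(hv.monotone hxn).trans hlo, x, hx, rfl⟩
  rw [zc, hset, hv.injective.injOn.ncard_image, ← zc, zc_penum hAc]

variable (hA : PrimrecPred (· ∈ A)) (hvp : Primrec v) (hv : StrictMono v)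
include hA hvp hv

lemma primrecPred_stretch : PrimrecPred (· ∈ stretch A v) := by
  have hpre : PrimrecRel fun x t => x ∉ A ∧ v x = t :=
    (hA.not.comp Primrec.fst).and (Primrec.eq.comp (hvp.comp Primrec.fst) Primrec.snd)
  refine (hpre.exists_lt.comp Primrec.succ Primrec.id).not.of_eq fun t => ?_
  rw [← not_iff_not, not_not, notMem_stretch_iff]
  exact ⟨fun ⟨x, _, hx⟩ => ⟨x, hx⟩,
    fun ⟨x, hx, hxt⟩ => ⟨x, Nat.lt_succ_of_le (hxt ▸ hv.id_le x), hx, hxt⟩⟩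

lemma prRed_REq_stretch (hv0 : 0 < v 0) : PrRed (REq A) (REq (stretch A v)) := by
  classical
  refine ⟨fun x => if x ∈ A then 0 else v x, Primrec.ite hA (Primrec.const 0) hvp,
    REq_iff_REq_of (fun x hx y hy => by simp [hx, hy]) (fun x hx => ?_) fun x hx y hxy => ?_⟩
  · simp only [if_neg hx, notMem_stretch_iff]
    exact ⟨x, hx, rfl⟩
  · by_cases hy : y ∈ A
    · simp only [if_neg hx, if_pos hy] at hxy
      exact absurd hxy (hv0.trans_le (hv.monotone (Nat.zero_le x))).ne'
    · simp only [if_neg hx, if_neg hy] at hxy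
      exact hv.injective hxy

/-- The reduction sends `v x` to `g x` for `x ∉ A`, and all of `stretch A v` to `c`. -/
lemma prRed_stretch_REq_of {g : ℕ → ℕ} (hg : Primrec g) (hginj : g.Injective)
    (hgA : ∀ x ∉ A, g x ∉ A) {c : ℕ} (hc : ∀ x ∉ A, g x ≠ c) :
    PrRed (REq (stretch A v)) (REq A) := by
  classical
  have hinv : ∀ x, Nat.findGreatest (fun y => v y = v x) (v x) = x := fun x =>
    hv.injective (Nat.findGreatest_spec (P := fun y => v y = v x) (hv.id_le x) rfl)
  refine ⟨fun t => if t ∈ stretch A v then c else g (Nat.findGreatest (fun y => v y = t) t),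
    Primrec.ite (primrecPred_stretch hA hvp hv) (Primrec.const c)
      (hg.comp (Primrec.nat_findGreatest Primrec.id
        (Primrec.eq.comp (hvp.comp Primrec.snd) Primrec.fst))),
    REq_iff_REq_of (fun t ht t' ht' => by simp [ht, ht']) (fun t ht => ?_)
      fun t ht t' htt' => ?_⟩
  · obtain ⟨x, hx, rfl⟩ := notMem_stretch_iff.1 ht
    simpa only [if_neg ht, hinv] using hgA x hx
  · obtain ⟨x, hx, rfl⟩ := notMem_stretch_iff.1 ht
    by_cases ht' : t' ∈ stretch A v
    · simp only [if_neg ht, if_pos ht', hinv] at htt'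
      exact absurd htt' (hc x hx)
    · obtain ⟨x', hx', rfl⟩ := notMem_stretch_iff.1 ht'
      simp only [if_neg ht, if_neg ht', hinv] at htt'
      rw [hginj htt']

lemma prEquiv_stretch (hv0 : 0 < v 0) : PrEquiv (REq (stretch A v)) (REq A) := by
  refine ⟨?_, prRed_REq_stretch hA hvp hv hv0⟩
  rcases A.eq_empty_or_nonempty with rfl | ⟨w, hw⟩
  · exact prRed_stretch_REq_of hA hvp hv Primrec.succ Nat.succ_injective (fun _ _ => id)
      (c := 0) fun _ _ => Nat.succ_ne_zero _
  · exact prRed_stretch_REq_of hA hvp hv Primrec.id Function.injective_id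
      (fun _ hx => hx) fun x hx (h : x = w) => hx (h ▸ hw)

end Stretch

noncomputable def catchUp (X Y : Set ℕ) (x : ℕ) : ℕ := sInf {y | zc X x ≤ zc Y y}

section CatchUp

variable {X Y : Set ℕ} (hYc : Yᶜ.Infinite)
include hYc

lemma catchUp_le_iff {x y : ℕ} : catchUp X Y x ≤ y ↔ zc X x ≤ zc Y y := by
  have hne : {y | zc X x ≤ zc Y y}.Nonempty :=
    ⟨penum Y (zc X x), by rw [Set.mem_ofPred_eq, zc_penum hYc]; omega⟩
  exact ⟨fun h => (Nat.sInf_mem hne).trans (zc_mono Y h), fun h => Nat.sInf_le h⟩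

lemma le_zc_catchUp (x : ℕ) : zc X x ≤ zc Y (catchUp X Y x) :=
  (catchUp_le_iff hYc).1 le_rfl

lemma catchUp_mono : Monotone (catchUp X Y) := fun _ _ h =>
  (catchUp_le_iff hYc).2 ((zc_mono X h).trans (le_zc_catchUp hYc _))

lemma primrec_catchUp (hX : Primrec (zc X)) (hY : Primrec (zc Y)) {B : ℕ → ℕ} (hB : Primrec B)
    (hXB : ∀ x, zc X x ≤ zc Y (B x)) : Primrec (catchUp X Y) := by
  refine Primrec.of_graph ⟨B, hB, fun x => (catchUp_le_iff hYc).2 (hXB x)⟩ ?_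
  have hgraph : PrimrecRel fun x y => zc X x ≤ zc Y y ∧ ∀ z < y, zc Y z < zc X x :=
    (Primrec.nat_le.comp (hX.comp Primrec.fst) (hY.comp Primrec.snd)).and
      ((PrimrecRel.forall_lt (R := fun z x => zc Y z < zc X x)
        (Primrec.nat_lt.comp (hY.comp Primrec.fst) (hX.comp Primrec.snd))).comp
          Primrec.snd Primrec.fst)
  refine hgraph.of_eq fun x y => ⟨fun ⟨hle, hmin⟩ => ?_, ?_⟩
  · exact le_antisymm ((catchUp_le_iff hYc).2 hle)
      (not_lt.1 fun h => (hmin _ h).not_ge (le_zc_catchUp hYc x))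
  · rintro rfl
    exact ⟨le_zc_catchUp hYc x, fun z hz => not_le.1 fun h => hz.not_ge ((catchUp_le_iff hYc).2 h)⟩

lemma strictMono_catchUp_add {u : ℕ → ℕ} (hu : Monotone u) :
    StrictMono fun x => u (catchUp X Y x) + x + 1 := fun x x' h => by
  have := hu (catchUp_mono (X := X) hYc h.le)
  dsimp only
  omega

lemma zc_stretch_catchUp (hXc : Xᶜ.Infinite) {u : ℕ → ℕ} (hu : Monotone u) {n t : ℕ}
    (hlo : u (penum Y n) + penum X n + 1 ≤ t) (hhi : t < u (penum Y (n + 1))) :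
    zc (stretch X fun x => u (catchUp X Y x) + x + 1) t = n + 1 := by
  have hcn : catchUp X Y (penum X n) ≤ penum Y n := by
    rw [catchUp_le_iff hYc, zc_penum hXc, zc_penum hYc]
  have hcn1 : penum Y (n + 1) ≤ catchUp X Y (penum X (n + 1)) := by
    have := le_zc_catchUp hYc (X := X) (penum X (n + 1))
    rw [zc_penum hXc] at this
    rw [penum_le_iff hYc]
    omega
  refine zc_stretch hXc (strictMono_catchUp_add hYc hu) ?_ ?_
  · have := hu hcn
    omega
  · have := hu hcn1
    omega

end CatchUp

theorem exists_primrec_of_diamondProp {X Y : Set ℕ} (hXc : Xᶜ.Infinite) (hYc : Yᶜ.Infinite)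
    (hD : DiamondProp X Y) :
    ∃ r : ℕ → ℕ, Primrec r ∧ {n | penum X n ≤ r (penum Y (n + 1))}.Infinite := by
  obtain ⟨X', Y', -, -, ⟨⟨fa, hfap, hfa⟩, ⟨fa', -, hfa'⟩⟩, ⟨-, ⟨fb, hfbp, hfb⟩⟩, hmeet⟩ := hD
  have hX'c : X'ᶜ.Infinite := infinite_compl_of_reduction hfa' hXc
  have hY'c : Y'ᶜ.Infinite := infinite_compl_of_reduction hfb hYc
  refine ⟨fun y => partialSum fa (partialSum fb (y + 1)),
    (primrec_partialSum hfap).comp ((primrec_partialSum hfbp).comp Primrec.succ),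
    Set.infinite_of_forall_exists_gt fun N => ?_⟩
  obtain ⟨t, ht, hmeet⟩ := hmeet (penum X' (N + 1))
  have hN : N + 2 ≤ zc X' t := zc_penum hX'c (N + 1) ▸ zc_mono X' ht
  obtain ⟨n, hn⟩ : ∃ n, zc X' t = n + 1 := ⟨zc X' t - 1, by omega⟩
  refine ⟨n, ?_, by omega⟩
  have hX : penum X n ≤ partialSum fa (t + 1) := by
    rw [penum_le_iff hXc]
    have := zc_le_zc_partialSum hfa t
    omega
  have hY' : t < penum Y' (n + 1) := not_le.1 fun h => by
    rw [penum_le_iff hY'c] at h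
    omega
  calc penum X n ≤ partialSum fa (t + 1) := hX
    _ ≤ partialSum fa (partialSum fb (penum Y (n + 1) + 1)) :=
      partialSum_mono fa (Nat.succ_le_of_lt (hY'.trans_le (penum_le_partialSum hfb hYc hY'c _)))

theorem diamondProp_of_exists_primrec {X Y : Set ℕ} (hX : PRSet X) (hY : PRSet Y)
    (hXc : Xᶜ.Infinite) (hYc : Yᶜ.Infinite) (hred : PrRed (REq X) (REq Y)) {r : ℕ → ℕ}
    (hr : Primrec r) (hinf : {n | penum X n ≤ r (penum Y (n + 1))}.Infinite) :
    DiamondProp X Y := by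
  rw [prSet_iff_primrecPred] at hX hY
  obtain ⟨f, hfp, hf⟩ := hred
  set u := partialSum fun y => r y + 2
  set s := fun x => u (catchUp X Y x) + x + 1
  have hgap : ∀ {y y'}, y < y' → u y + (r y' + 2) ≤ u y' := fun h => partialSum_add_le h
  have hu : StrictMono u := fun _ _ h => by have := hgap h; omega
  have hu0 : 0 < u 0 := lt_of_lt_of_le (by omega) (le_partialSum le_rfl)
  have hs : StrictMono s := strictMono_catchUp_add hYc hu.monotone
  have hup : Primrec u := primrec_partialSum (Primrec.nat_add.comp hr (Primrec.const 2))
  have hsp : Primrec s := Primrec.succ.comp (Primrec.nat_add.comp (hup.comp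
    (primrec_catchUp hYc (primrec_zc hX) (primrec_zc hY)
      ((primrec_partialSum hfp).comp Primrec.succ) (zc_le_zc_partialSum hf))) Primrec.id)
  refine ⟨stretch X s, stretch Y u, prSet_iff_primrecPred.2 (primrecPred_stretch hX hsp hs),
    prSet_iff_primrecPred.2 (primrecPred_stretch hY hup hu),
    prEquiv_stretch hX hsp hs (Nat.succ_pos _), prEquiv_stretch hY hup hu hu0, fun S => ?_⟩
  obtain ⟨n, hn, hSn⟩ := hinf.exists_gt S
  have hYn : penum Y n < penum Y (n + 1) := penum_strictMono hYc n.lt_succ_self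
  have hnY : n ≤ penum Y n := (penum_strictMono hYc).id_le n
  have hu1 : penum Y (n + 1) ≤ u (penum Y (n + 1)) := hu.id_le _
  refine ⟨u (penum Y (n + 1)) - 1, by omega, ?_⟩
  have hXlo : u (penum Y n) + penum X n + 1 ≤ u (penum Y (n + 1)) - 1 := by
    have := hgap hYn
    simp only [Set.mem_ofPred_eq] at hn
    omega
  have hYlo : u (penum Y n) ≤ u (penum Y (n + 1)) - 1 := by have := hu hYn; omega
  rw [zc_stretch_catchUp hYc hXc hu.monotone hXlo (by omega), zc_stretch hYc hu hYlo (by omega)]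

theorem stmt_16 (X Y : Set ℕ) (hX : PRSet X) (hY : PRSet Y)
    (hXc : Xᶜ.Infinite) (hYc : Yᶜ.Infinite)
    (hred : PrRed (REq X) (REq Y)) :
    DiamondProp X Y ↔
      ∃ r : ℕ → ℕ, Primrec r ∧ {n | penum X n ≤ r (penum Y (n + 1))}.Infinite :=
  ⟨exists_primrec_of_diamondProp hXc hYc,
    fun ⟨_, hr, hinf⟩ => diamondProp_of_exists_primrec hX hY hXc hYc hred hr hinf⟩
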